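/- Let M be a future timelike geodesically complete spacetime with compact Cauchy surface S, and suppose γ is a future timelike S-ray with S ⊆ I⁻(γ). Then the max-min condition holds on S: there exists R ≥ 0 such that k − min_{x∈S} d(x, S⁺_k(S)) ≤ R for all k, i.e., max_{x∈S} d(x, S⁺_k(S)) − min_{x∈S} d(x, S⁺_k(S)) ≤ R. -/

import Mathlib

open Set Filter Topology

/-- An abstract spacetime: a topological space equipped with a chronological
relation `ll` (`≪`), a causal relation `le` (`≤`) and a Lorentzian distance
function `d`, satisfying the standard causal-theoretic axioms. -/
structure Spacetime (M : Type*) [TopologicalSpace M] where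
  ll : M → M → Prop
  le : M → M → Prop
  d : M → M → ℝ
  ll_trans : ∀ {x y z}, ll x y → ll y z → ll x z
  le_refl : ∀ x, le x x
  le_trans : ∀ {x y z}, le x y → le y z → le x z
  ll_imp_le : ∀ {x y}, ll x y → le x y
  ll_le : ∀ {x y z}, ll x y → le y z → ll x z
  le_ll : ∀ {x y z}, le x y → ll y z → ll x z
  isOpen_ll : IsOpen {p : M × M | ll p.1 p.2}
  d_nonneg : ∀ x y, 0 ≤ d x y
  d_zero_of_not_le : ∀ {x y}, ¬ le x y → d x y = 0

variable {M : Type*} [TopologicalSpace M]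

/-- Chronological future `I⁺(S)`. -/
def Spacetime.Iplus (st : Spacetime M) (S : Set M) : Set M := {y | ∃ x ∈ S, st.ll x y}
/-- Chronological past `I⁻(S)`. -/
def Spacetime.Iminus (st : Spacetime M) (S : Set M) : Set M := {y | ∃ x ∈ S, st.ll y x}
/-- Causal future `J⁺(S)`. -/
def Spacetime.Jplus (st : Spacetime M) (S : Set M) : Set M := {y | ∃ x ∈ S, st.le x y}
/-- Causal past `J⁻(S)`. -/
def Spacetime.Jminus (st : Spacetime M) (S : Set M) : Set M := {y | ∃ x ∈ S, st.le y x}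

/-- A future set: `I⁺(F) = F`. -/
def Spacetime.IsFutureSet (st : Spacetime M) (F : Set M) : Prop := st.Iplus F = F
/-- A past set: `I⁻(P) = P`. -/
def Spacetime.IsPastSet (st : Spacetime M) (P : Set M) : Prop := st.Iminus P = P

/-- An achronal boundary: a nonempty boundary of a future set or of a past set. -/
def Spacetime.IsAchronalBoundary (st : Spacetime M) (A : Set M) : Prop :=
  A.Nonempty ∧ ((∃ F, st.IsFutureSet F ∧ A = frontier F) ∨
                (∃ P, st.IsPastSet P ∧ A = frontier P))

def Spacetime.IsAchronal (st : Spacetime M) (S : Set M) : Prop :=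
  ∀ x ∈ S, ∀ y ∈ S, ¬ st.ll x y

def Spacetime.IsAcausal (st : Spacetime M) (S : Set M) : Prop :=
  ∀ x ∈ S, ∀ y ∈ S, st.le x y → x = y

/-- A (continuous) future-directed timelike curve defined on `I`. -/
def Spacetime.IsTimelikeCurveOn (st : Spacetime M) (γ : ℝ → M) (I : Set ℝ) : Prop :=
  ContinuousOn γ I ∧ ∀ s ∈ I, ∀ t ∈ I, s < t → st.ll (γ s) (γ t)

/-- A (continuous) future-directed causal curve defined on `I`. -/
def Spacetime.IsCausalCurveOn (st : Spacetime M) (γ : ℝ → M) (I : Set ℝ) : Prop :=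
  ContinuousOn γ I ∧ ∀ s ∈ I, ∀ t ∈ I, s ≤ t → st.le (γ s) (γ t)

/-- Future inextendibility of a curve parameterized towards `+∞`. -/
def FutureInext (γ : ℝ → M) : Prop := ¬ ∃ p : M, Tendsto γ atTop (𝓝 p)
/-- Past inextendibility of a curve parameterized towards `-∞`. -/
def PastInext (γ : ℝ → M) : Prop := ¬ ∃ p : M, Tendsto γ atBot (𝓝 p)

/-- An inextendible future-directed causal curve (parameterized over all of `ℝ`). -/
def Spacetime.IsInextCausalCurve (st : Spacetime M) (γ : ℝ → M) : Prop :=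
  st.IsCausalCurveOn γ Set.univ ∧ FutureInext γ ∧ PastInext γ

/-- A Cauchy surface: an achronal set met by every inextendible causal curve. -/
def Spacetime.IsCauchySurface (st : Spacetime M) (S : Set M) : Prop :=
  st.IsAchronal S ∧ ∀ γ : ℝ → M, st.IsInextCausalCurve γ → ∃ t, γ t ∈ S

/-- `S` is future causally complete: for every `p ∈ J⁺(S)` the closure in `S`
of `J⁻(p) ∩ S` is compact. -/
def Spacetime.FutureCausallyComplete (st : Spacetime M) (S : Set M) : Prop :=
  ∀ p ∈ st.Jplus S, IsCompact (closure (st.Jminus {p} ∩ S) ∩ S)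

/-- `S` is past causally complete: for every `p ∈ J⁻(S)` the closure in `S`
of `J⁺(p) ∩ S` is compact. -/
def Spacetime.PastCausallyComplete (st : Spacetime M) (S : Set M) : Prop :=
  ∀ p ∈ st.Jminus S, IsCompact (closure (st.Jplus {p} ∩ S) ∩ S)

/-- `x` is an edge point of the achronal set `S`. -/
def Spacetime.EdgePoint (st : Spacetime M) (S : Set M) (x : M) : Prop :=
  x ∈ closure S ∧ ∀ U ∈ 𝓝 x, ∃ γ : ℝ → M,
    st.IsTimelikeCurveOn γ (Set.Icc 0 1) ∧
    (∀ t ∈ Set.Icc (0:ℝ) 1, γ t ∈ U ∧ γ t ∉ S) ∧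
    st.ll (γ 0) x ∧ st.ll x (γ 1)

/-- `S` is edgeless. -/
def Spacetime.Edgeless (st : Spacetime M) (S : Set M) : Prop :=
  ∀ x, ¬ st.EdgePoint S x

/-- The past domain of dependence `D⁻(S)`: points from which every
future-inextendible causal curve meets `S`. -/
def Spacetime.PastDomain (st : Spacetime M) (S : Set M) : Set M :=
  {p | ∀ γ : ℝ → M, st.IsCausalCurveOn γ (Set.Ici 0) → γ 0 = p → FutureInext γ →
        ∃ t ∈ Set.Ici (0:ℝ), γ t ∈ S}

/-- The past Cauchy horizon `H⁻(S) = closure D⁻(S) \ I⁺(D⁻(S))`. -/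
def Spacetime.PastHorizon (st : Spacetime M) (S : Set M) : Set M :=
  {p | p ∈ closure (st.PastDomain S) ∧ ∀ q, st.ll q p → q ∉ st.PastDomain S}

/-- Lorentzian distance from the set `S` to the point `q`:  `d(S,q) = sup_{x∈S} d(x,q)`. -/
noncomputable def distFrom (d : M → M → ℝ) (S : Set M) (q : M) : ℝ :=
  sSup ((fun x => d x q) '' S)

/-- Lorentzian distance from the point `q` to the set `C`:  `d(q,C) = sup_{y∈C} d(q,y)`. -/
noncomputable def distTo (d : M → M → ℝ) (q : M) (C : Set M) : ℝ :=
  sSup ((fun y => d q y) '' C)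

/-- Lorentzian distance between the sets `A` and `B`: `sup_{a∈A,b∈B} d(a,b)`. -/
noncomputable def distBetween (d : M → M → ℝ) (A B : Set M) : ℝ :=
  sSup (Set.image2 d A B)

/-- The past sphere `S⁻_r(C) = {x : d(x,C) = r}`. -/
def pastSphere (d : M → M → ℝ) (r : ℝ) (C : Set M) : Set M := {x | distTo d x C = r}

/-- The future sphere `S⁺_r(S) = {x : d(S,x) = r}`. -/
def futureSphere (d : M → M → ℝ) (r : ℝ) (S : Set M) : Set M := {x | distFrom d S x = r}

/-- A globally hyperbolic spacetime: the causal relation is a closed partial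
order, causal diamonds are compact, the Lorentzian distance is finite-valued,
continuous, positive exactly on chronologically related pairs, satisfies the
reverse triangle inequality, and causally related points are joined by
maximal causal geodesic segments. -/
structure GloballyHyperbolic (M : Type*) [TopologicalSpace M] extends Spacetime M where
  le_antisymm : ∀ {x y}, le x y → le y x → x = y
  isClosed_le : IsClosed {p : M × M | le p.1 p.2}
  compact_diamonds : ∀ p q : M, IsCompact {x | le p x ∧ le x q}
  d_cont : Continuous fun p : M × M => d p.1 p.2
  d_pos_iff : ∀ x y, 0 < d x y ↔ ll x y
  rev_triangle : ∀ {x y z}, le x y → le y z → d x y + d y z ≤ d x z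
  max_geodesic : ∀ x y, le x y → ∃ γ : ℝ → M,
    γ 0 = x ∧ γ 1 = y ∧ ContinuousOn γ (Set.Icc 0 1) ∧
    (∀ s ∈ Set.Icc (0:ℝ) 1, ∀ t ∈ Set.Icc (0:ℝ) 1, s ≤ t → le (γ s) (γ t)) ∧
    (∀ s ∈ Set.Icc (0:ℝ) 1, ∀ t ∈ Set.Icc (0:ℝ) 1, ∀ u ∈ Set.Icc (0:ℝ) 1,
      s ≤ t → t ≤ u → d (γ s) (γ u) = d (γ s) (γ t) + d (γ t) (γ u))

/-- A future `S`-ray: a future-inextendible causal curve from a point of `S`,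
each of whose initial segments is a maximal `S`-segment (maximality being
encoded by additivity of the Lorentzian distance along the curve and by
`L(γ|[0,t]) = d(γ 0, γ t) = d(S, γ t)`). -/
def Spacetime.IsFutureSRay (st : Spacetime M) (S : Set M) (γ : ℝ → M) : Prop :=
  γ 0 ∈ S ∧ st.IsCausalCurveOn γ (Set.Ici 0) ∧ FutureInext γ ∧
  (∀ t ∈ Set.Ici (0:ℝ), st.d (γ 0) (γ t) = distFrom st.d S (γ t)) ∧
  (∀ s ∈ Set.Ici (0:ℝ), ∀ t ∈ Set.Ici (0:ℝ), ∀ u ∈ Set.Ici (0:ℝ), s ≤ t → t ≤ u →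
    st.d (γ s) (γ u) = st.d (γ s) (γ t) + st.d (γ t) (γ u))

/-- A timelike future `S`-ray. -/
def Spacetime.IsTimelikeFutureSRay (st : Spacetime M) (S : Set M) (γ : ℝ → M) : Prop :=
  st.IsFutureSRay S γ ∧
  ∀ s ∈ Set.Ici (0:ℝ), ∀ t ∈ Set.Ici (0:ℝ), s < t → st.ll (γ s) (γ t)

/-- A past timelike `S`-ray (parameterized so that `t → ∞` goes to the past). -/
def Spacetime.IsTimelikePastSRay (st : Spacetime M) (S : Set M) (γ : ℝ → M) : Prop :=
  γ 0 ∈ S ∧ ContinuousOn γ (Set.Ici 0) ∧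
  (∀ s ∈ Set.Ici (0:ℝ), ∀ t ∈ Set.Ici (0:ℝ), s < t → st.ll (γ t) (γ s)) ∧
  FutureInext γ ∧
  (∀ t ∈ Set.Ici (0:ℝ), st.d (γ t) (γ 0) = distTo st.d (γ t) S) ∧
  (∀ s ∈ Set.Ici (0:ℝ), ∀ t ∈ Set.Ici (0:ℝ), ∀ u ∈ Set.Ici (0:ℝ), s ≤ t → t ≤ u →
    st.d (γ u) (γ s) = st.d (γ u) (γ t) + st.d (γ t) (γ s))

/-- A future-complete unit speed timelike `S`-ray `γ : [0,∞) → M`. -/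
def GloballyHyperbolic.IsUnitTimelikeSRay (gh : GloballyHyperbolic M) (S : Set M)
    (γ : ℝ → M) : Prop :=
  γ 0 ∈ S ∧ ContinuousOn γ (Set.Ici 0) ∧
  (∀ s ∈ Set.Ici (0:ℝ), ∀ t ∈ Set.Ici (0:ℝ), s < t → gh.ll (γ s) (γ t)) ∧
  (∀ s ∈ Set.Ici (0:ℝ), ∀ t ∈ Set.Ici (0:ℝ), s ≤ t → gh.d (γ s) (γ t) = t - s) ∧
  (∀ t ∈ Set.Ici (0:ℝ), distFrom gh.d S (γ t) = gh.d (γ 0) (γ t)) ∧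
  FutureInext γ

/-- A timelike geodesic, encoded as a locally maximal unit-speed timelike curve. -/
def Spacetime.IsTimelikeGeodesicOn (st : Spacetime M) (γ : ℝ → M) (I : Set ℝ) : Prop :=
  ContinuousOn γ I ∧ (∀ s ∈ I, ∀ t ∈ I, s < t → st.ll (γ s) (γ t)) ∧
  ∀ t ∈ I, ∃ ε > 0, ∀ s₁ ∈ I ∩ Set.Icc (t-ε) (t+ε), ∀ s₂ ∈ I ∩ Set.Icc (t-ε) (t+ε),
    s₁ ≤ s₂ → st.d (γ s₁) (γ s₂) = s₂ - s₁

/-- Future timelike geodesic completeness: every future-directed timelike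
geodesic segment extends to infinite affine parameter. -/
def Spacetime.FutureTimelikeComplete (st : Spacetime M) : Prop :=
  ∀ (γ : ℝ → M) (a b : ℝ), a < b → st.IsTimelikeGeodesicOn γ (Set.Icc a b) →
    ∃ γ' : ℝ → M, Set.EqOn γ' γ (Set.Icc a b) ∧ st.IsTimelikeGeodesicOn γ' (Set.Ici a)

/-- Past timelike geodesic completeness. -/
def Spacetime.PastTimelikeComplete (st : Spacetime M) : Prop :=
  ∀ (γ : ℝ → M) (a b : ℝ), a < b → st.IsTimelikeGeodesicOn γ (Set.Icc a b) →
    ∃ γ' : ℝ → M, Set.EqOn γ' γ (Set.Icc a b) ∧ st.IsTimelikeGeodesicOn γ' (Set.Iic b)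

/-- A generalized past horosphere: the achronal limit of a monotonic sequence
of past spheres `S⁻_{r_k}(C_k)` with radii `r_k → ∞`. -/
def GloballyHyperbolic.IsPastHorosphere (gh : GloballyHyperbolic M) (Sinf : Set M) : Prop :=
  ∃ (C : ℕ → Set M) (r : ℕ → ℝ),
    (∀ k, gh.toSpacetime.PastCausallyComplete (C k)) ∧
    (∀ k, 0 < r k) ∧ Tendsto r atTop atTop ∧
    (∀ k, (pastSphere gh.d (r k) (C k)).Nonempty) ∧
    (((∀ k, pastSphere gh.d (r k) (C k) ⊆
          gh.toSpacetime.Jminus (pastSphere gh.d (r (k+1)) (C (k+1)))) ∧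
        Sinf = frontier (⋃ k, gh.toSpacetime.Iminus (pastSphere gh.d (r k) (C k)))) ∨
     ((∀ k, pastSphere gh.d (r (k+1)) (C (k+1)) ⊆
          gh.toSpacetime.Jminus (pastSphere gh.d (r k) (C k))) ∧
        Sinf = frontier (⋂ k, gh.toSpacetime.Jminus (pastSphere gh.d (r k) (C k)))))

/-!
Compactness of `S` and openness of chronological pasts give one point `γ t₀` of the ray with
`S ⊆ I⁻(γ t₀)`. For `x ∈ S` the point `γ (k + 1)` lies on the future sphere `S⁺_{k+1}(S)`, and
the reverse triangle inequality through `γ t₀` gives `d(x, γ (k + 1)) ≥ k + 1 - t₀`; on the other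
hand no point of `S` is farther than `k + 1` from that sphere. Hence `R = t₀` works.
-/

namespace Spacetime

variable {M : Type*} [TopologicalSpace M] (st : Spacetime M)

theorem isOpen_setOf_ll_left (p : M) : IsOpen {x | st.ll x p} :=
  st.isOpen_ll.preimage (continuous_id.prodMk continuous_const)

theorem exists_forall_ll_of_isCompact {S : Set M} (hS : IsCompact S) {γ : ℝ → M}
    (hγ : ∀ s ∈ Ici (0:ℝ), ∀ t ∈ Ici (0:ℝ), s ≤ t → st.le (γ s) (γ t))
    (hsub : S ⊆ {x | ∃ t ∈ Ici (0:ℝ), st.ll x (γ t)}) :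
    ∃ t₀, 0 ≤ t₀ ∧ ∀ x ∈ S, st.ll x (γ t₀) := by
  have hcover : S ⊆ ⋃ t : Ici (0:ℝ), {x | st.ll x (γ t)} := fun x hx => by
    obtain ⟨t, ht, hxt⟩ := hsub hx
    exact mem_iUnion.2 ⟨⟨t, ht⟩, hxt⟩
  have hdir : Directed (· ⊆ ·) fun t : Ici (0:ℝ) => {x | st.ll x (γ t)} := fun s t =>
    ⟨max s t,
      fun _ hx => st.ll_le hx (hγ s s.2 _ (max s t).2 (le_max_left s t)),
      fun _ hx => st.ll_le hx (hγ t t.2 _ (max s t).2 (le_max_right s t))⟩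
  obtain ⟨t₀, ht₀⟩ := hS.elim_directed_cover _ (fun t => st.isOpen_setOf_ll_left _) hcover hdir
  exact ⟨t₀, t₀.2, ht₀⟩

end Spacetime

namespace GloballyHyperbolic

variable {M : Type*} [TopologicalSpace M] (gh : GloballyHyperbolic M) {S : Set M}

theorem bddAbove_image_d_left (hS : IsCompact S) (y : M) :
    BddAbove ((fun x => gh.d x y) '' S) :=
  (hS.image (gh.d_cont.comp (continuous_id.prodMk continuous_const))).bddAbove

theorem d_le_of_mem_futureSphere (hS : IsCompact S) {r : ℝ} {x y : M} (hx : x ∈ S)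
    (hy : y ∈ futureSphere gh.d r S) : gh.d x y ≤ r :=
  hy ▸ le_csSup (gh.bddAbove_image_d_left hS y) (mem_image_of_mem _ hx)

theorem distTo_futureSphere_le (hS : IsCompact S) {r : ℝ} (hr : 0 ≤ r) {x : M} (hx : x ∈ S) :
    distTo gh.d x (futureSphere gh.d r S) ≤ r :=
  Real.sSup_le (forall_mem_image.2 fun _ hy => gh.d_le_of_mem_futureSphere hS hx hy) hr

theorem d_le_distTo_futureSphere (hS : IsCompact S) {r : ℝ} {x y : M} (hx : x ∈ S)
    (hy : y ∈ futureSphere gh.d r S) : gh.d x y ≤ distTo gh.d x (futureSphere gh.d r S) :=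
  le_csSup ⟨r, forall_mem_image.2 fun _ hz => gh.d_le_of_mem_futureSphere hS hx hz⟩
    (mem_image_of_mem _ hy)

namespace IsUnitTimelikeSRay

variable {gh} {γ : ℝ → M}

theorem le_apply (hγ : gh.IsUnitTimelikeSRay S γ) {s t : ℝ} (hs : 0 ≤ s) (hst : s ≤ t) :
    gh.le (γ s) (γ t) := by
  obtain ⟨-, -, hll, -⟩ := hγ
  rcases hst.eq_or_lt with rfl | hlt
  · exact gh.le_refl _
  · exact gh.ll_imp_le (hll s hs t (hs.trans hst) hlt)

theorem mem_futureSphere (hγ : gh.IsUnitTimelikeSRay S γ) {t : ℝ} (ht : 0 ≤ t) :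
    γ t ∈ futureSphere gh.d t S := by
  obtain ⟨-, -, -, hspeed, hdist, -⟩ := hγ
  change distFrom gh.d S (γ t) = t
  rw [hdist t ht, hspeed 0 self_mem_Ici t ht ht, sub_zero]

theorem sub_le_d (hγ : gh.IsUnitTimelikeSRay S γ) {x : M} {t₀ : ℝ} (ht₀ : 0 ≤ t₀)
    (hx : gh.le x (γ t₀)) (t : ℝ) :
    t - t₀ ≤ gh.d x (γ t) := by
  have hspeed := hγ.2.2.2.1
  rcases le_or_gt t₀ t with h | h
  · calc t - t₀ = gh.d (γ t₀) (γ t) := (hspeed t₀ ht₀ t (ht₀.trans h) h).symm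
      _ ≤ gh.d x (γ t₀) + gh.d (γ t₀) (γ t) := le_add_of_nonneg_left (gh.d_nonneg _ _)
      _ ≤ gh.d x (γ t) := gh.rev_triangle hx (hγ.le_apply ht₀ h)
  · linarith [gh.d_nonneg x (γ t)]

end IsUnitTimelikeSRay

end GloballyHyperbolic

theorem Sray_condition_implies_maxmin_general
    {M : Type*} [TopologicalSpace M] (gh : GloballyHyperbolic M)
    (S : Set M) (hScomp : IsCompact S)
    (γ : ℝ → M) (hγ : gh.IsUnitTimelikeSRay S γ)
    (hsub : S ⊆ {x | ∃ t ∈ Set.Ici (0:ℝ), gh.ll x (γ t)}) :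
    ∃ R : ℝ, 0 ≤ R ∧ ∀ k : ℕ,
      ((k : ℝ) + 1 -
        sInf ((fun x => distTo gh.d x (futureSphere gh.d ((k : ℝ) + 1) S)) '' S) ≤ R) ∧
      (sSup ((fun x => distTo gh.d x (futureSphere gh.d ((k : ℝ) + 1) S)) '' S) -
        sInf ((fun x => distTo gh.d x (futureSphere gh.d ((k : ℝ) + 1) S)) '' S) ≤ R) := by
  obtain ⟨t₀, ht₀, hll⟩ := gh.exists_forall_ll_of_isCompact hScomp
    (fun s hs t _ hst => hγ.le_apply hs hst) hsub
  refine ⟨t₀, ht₀, fun k => ?_⟩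
  set K : ℝ := (k : ℝ) + 1
  have hK : 0 ≤ K := by positivity
  have hinf : K - t₀ ≤ sInf ((fun x => distTo gh.d x (futureSphere gh.d K S)) '' S) :=
    le_csInf (Nonempty.image _ ⟨γ 0, hγ.1⟩) <| forall_mem_image.2 fun x hx =>
      (hγ.sub_le_d ht₀ (gh.ll_imp_le (hll x hx)) K).trans
        (gh.d_le_distTo_futureSphere hScomp hx (hγ.mem_futureSphere hK))
  have hsup : sSup ((fun x => distTo gh.d x (futureSphere gh.d K S)) '' S) ≤ K :=
    Real.sSup_le (forall_mem_image.2 fun x hx => gh.distTo_futureSphere_le hScomp hK hx) hK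
  exact ⟨by linarith, by linarith⟩

/-- If `γ` is a future timelike `S`-ray from a compact Cauchy
surface `S` with `S ⊆ I⁻(γ)` (in a future timelike geodesically complete
spacetime), then the max-min condition holds on `S`. -/
theorem Sray_condition_implies_maxmin
    {M : Type*} [TopologicalSpace M] (gh : GloballyHyperbolic M)
    (hcomp : gh.toSpacetime.FutureTimelikeComplete)
    (S : Set M) (hScomp : IsCompact S) (hSCau : gh.toSpacetime.IsCauchySurface S)
    (γ : ℝ → M) (hγ : gh.IsUnitTimelikeSRay S γ)
    (hsub : S ⊆ {x | ∃ t ∈ Set.Ici (0:ℝ), gh.ll x (γ t)}) :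
    ∃ R : ℝ, 0 ≤ R ∧ ∀ k : ℕ,
      ((k : ℝ) + 1 -
        sInf ((fun x => distTo gh.d x (futureSphere gh.d ((k : ℝ) + 1) S)) '' S) ≤ R) ∧
      (sSup ((fun x => distTo gh.d x (futureSphere gh.d ((k : ℝ) + 1) S)) '' S) -
        sInf ((fun x => distTo gh.d x (futureSphere gh.d ((k : ℝ) + 1) S)) '' S) ≤ R) :=
  Sray_condition_implies_maxmin_general gh S hScomp γ hγ hsub
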